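/- arXiv:2510.00122 — 2 statements merged into one kernel-verified Lean document; each statement's English description precedes it below -/
import Mathlib

section
/- Let K ≥ 3, let ρ : ℝ → [0,∞) satisfy {ρ(u) : u ∈ ℝ} = [0,∞), and let τ : ℝ → ℝ be non-increasing on u < 0, non-decreasing on u > 0, with {τ(u) : u ≤ 0} = {τ(u) : u ≥ 0} = [τ(0), ∞). Then the image of the map u ↦ (P_sl(y; τ(ρ[u])))_{y∈[K]} from ℝ^K to ℝ^K equals Δ̂_{K-1}^∅, the set of unimodal probability vectors all of whose coordinates are nonzero. -/
open scoped BigOperators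

noncomputable section

/-- The probability simplex Δ_{K-1} ⊆ ℝ^K. -/
def simplex (K : ℕ) : Set (Fin K → ℝ) :=
  {p | (∑ k, p k) = 1 ∧ ∀ k, 0 ≤ p k ∧ p k ≤ 1}

/-- A PMF (vector) is unimodal: there is a mode M such that p is
nondecreasing up to M and nonincreasing after M. -/
def Unimodal {K : ℕ} (p : Fin K → ℝ) : Prop :=
  ∃ M : Fin K, (∀ k, p k ≤ p M) ∧
    (∀ i j : Fin K, i ≤ j → j ≤ M → p i ≤ p j) ∧
    (∀ i j : Fin K, M ≤ i → i ≤ j → p j ≤ p i)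

/-- Δ̂_{K-1}: the set of unimodal PMFs. -/
def uniSimplex (K : ℕ) : Set (Fin K → ℝ) :=
  {p | p ∈ simplex K ∧ Unimodal p}

/-- The stereotype logit (SL) link function. -/
def Psl {K : ℕ} (u : Fin K → ℝ) (y : Fin K) : ℝ :=
  Real.exp (-(u y)) / ∑ k, Real.exp (-(u k))

/-- The ordering transform ρ[u]: (ρ[u])_1 = u_1, (ρ[u])_k = (ρ[u])_{k-1} + ρ(u_k). -/
def ordT (ρ : ℝ → ℝ) {K : ℕ} (u : Fin K → ℝ) : Fin K → ℝ :=
  fun k => u ⟨0, k.pos⟩ +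
    ∑ j ∈ Finset.univ.filter (fun j : Fin K => 0 < (j : ℕ) ∧ (j : ℕ) ≤ (k : ℕ)), ρ (u j)

/-- The Euclidean norm on ℝ^K. -/
def euclNorm {K : ℕ} (u : Fin K → ℝ) : ℝ :=
  Real.sqrt (∑ k, (u k) ^ 2)

/-- Euclidean distance from a point to a set. -/
def DH {K : ℕ} (u : Fin K → ℝ) (S : Set (Fin K → ℝ)) : ℝ :=
  sInf ((fun v => euclNorm (u - v)) '' S)

/-!
Since `ρ ≥ 0`, the ordering transform `ρ[u]` is nondecreasing, and `τ` decreases up to `0` and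
increases after it, so `τ(ρ[u])` decreases up to its minimiser and increases afterwards; the SL
link reverses the order of the coordinates, which makes the resulting PMF unimodal.

Conversely, for a positive unimodal `p` the vector `t = τ(0) - log p` lies in `[τ(0), ∞)` and has
the reverse shape. Taking preimages of `t` under `τ` in `(-∞, 0]` up to the mode and in `[0, ∞)`
after it gives a nondecreasing `w` with `τ(w) = t`, surjectivity of `ρ` onto `[0, ∞)` writes `w`
as `ρ[u]`, and `P_sl(τ(0) - log p) = p`.
-/

open Set Real

section Valley

variable {α β : Type*} [LinearOrder α] [LinearOrder β] {τ : α → β} {c : α}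

lemma AntitoneOn.Iic_of_forall_le (h : AntitoneOn τ (Iio c)) (hmin : ∀ x, τ c ≤ τ x) :
    AntitoneOn τ (Iic c) := by
  rw [← Iio_insert, antitoneOn_insert_iff]
  exact ⟨fun b _ _ => hmin b, fun b hb hcb => absurd hcb (not_le.2 hb), h⟩

lemma MonotoneOn.Ici_of_forall_le (h : MonotoneOn τ (Ioi c)) (hmin : ∀ x, τ c ≤ τ x) :
    MonotoneOn τ (Ici c) := by
  rw [← Ioi_insert, monotoneOn_insert_iff]
  exact ⟨fun b hb hbc => absurd hbc (not_le.2 hb), fun b _ _ => hmin b, h⟩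

variable {ι : Type*} [LinearOrder ι]

/-- The minimiser of `τ ∘ w` separates its decreasing and its increasing part. -/
lemma exists_antitoneOn_monotoneOn_comp [Finite ι] [Nonempty ι]
    (hanti : AntitoneOn τ (Iic c)) (hmono : MonotoneOn τ (Ici c)) {w : ι → α} (hw : Monotone w) :
    ∃ M, AntitoneOn (τ ∘ w) (Iic M) ∧ MonotoneOn (τ ∘ w) (Ici M) := by
  obtain ⟨M, hM⟩ := Finite.exists_min (τ ∘ w)
  refine ⟨M, fun i hi j hj hij => ?_, fun i hi j hj hij => ?_⟩
  · rcases le_or_gt (w j) c with hwj | hwj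
    · exact hanti ((hw hij).trans hwj) hwj (hw hij)
    · exact (hmono hwj.le (hwj.le.trans (hw hj)) (hw hj)).trans (hM i)
  · rcases le_or_gt c (w i) with hwi | hwi
    · exact hmono hwi (hwi.trans (hw hij)) (hw hij)
    · exact (hanti ((hw hi).trans hwi.le) hwi.le (hw hi)).trans (hM j)

lemma exists_monotone_comp_eq (hanti : AntitoneOn τ (Iic c)) (hmono : MonotoneOn τ (Ici c))
    (hsurj_le : SurjOn τ (Iic c) (Ici (τ c))) (hsurj_ge : SurjOn τ (Ici c) (Ici (τ c)))
    {t : ι → β} {M : ι} (ht_anti : AntitoneOn t (Iic M)) (ht_mono : MonotoneOn t (Ici M))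
    (ht : ∀ k, τ c ≤ t k) :
    ∃ w : ι → α, Monotone w ∧ τ ∘ w = t := by
  have : Nonempty α := ⟨c⟩
  set g := Function.invFunOn τ (Iic c)
  set h := Function.invFunOn τ (Ici c)
  have hg : AntitoneOn g (Ici (τ c)) := Function.antitoneOn_of_rightInvOn_of_mapsTo hanti
    hsurj_le.rightInvOn_invFunOn hsurj_le.mapsTo_invFunOn
  have hh : MonotoneOn h (Ici (τ c)) := Function.monotoneOn_of_rightInvOn_of_mapsTo hmono
    hsurj_ge.rightInvOn_invFunOn hsurj_ge.mapsTo_invFunOn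
  refine ⟨fun k => if k ≤ M then g (t k) else h (t k), fun i j hij => ?_, funext fun k => ?_⟩
  · dsimp only
    split_ifs with hi hj hj
    · exact hg (ht j) (ht i) (ht_anti hi hj hij)
    · exact (hsurj_le.mapsTo_invFunOn (ht i)).trans (hsurj_ge.mapsTo_invFunOn (ht j))
    · exact absurd (hij.trans hj) hi
    · exact hh (ht i) (ht j) (ht_mono (le_of_not_ge hi) (le_of_not_ge hj) hij)
  · dsimp only [Function.comp_apply]
    split_ifs
    · exact hsurj_le.rightInvOn_invFunOn (ht k)
    · exact hsurj_ge.rightInvOn_invFunOn (ht k)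

end Valley

section OrderingTransform

variable {ρ : ℝ → ℝ} {K : ℕ}

lemma ordT_monotone (hρ : ∀ x, 0 ≤ ρ x) (u : Fin K → ℝ) : Monotone (ordT ρ u) := by
  intro i j hij
  refine add_le_add_right (Finset.sum_le_sum_of_subset_of_nonneg ?_ fun _ _ _ => hρ _) _
  intro x hx
  simp only [Finset.mem_filter, Finset.mem_univ, true_and] at hx ⊢
  exact ⟨hx.1, hx.2.trans hij⟩

lemma ordT_of_val_eq_zero (u : Fin K → ℝ) {k : Fin K} (hk : (k : ℕ) = 0) : ordT ρ u k = u k := by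
  have hfilter : Finset.univ.filter (fun j : Fin K => 0 < (j : ℕ) ∧ (j : ℕ) ≤ k) = ∅ := by
    ext j
    simp only [Finset.mem_filter, Finset.mem_univ, true_and, Finset.notMem_empty, iff_false]
    omega
  simp only [ordT, hfilter, Finset.sum_empty, add_zero]
  congr 1
  exact Fin.ext hk.symm

lemma ordT_of_val_eq_succ (u : Fin K → ℝ) {i j : Fin K} (hij : (i : ℕ) = j + 1) :
    ordT ρ u i = ordT ρ u j + ρ (u i) := by
  have hfilter : Finset.univ.filter (fun k : Fin K => 0 < (k : ℕ) ∧ (k : ℕ) ≤ i)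
      = insert i (Finset.univ.filter (fun k : Fin K => 0 < (k : ℕ) ∧ (k : ℕ) ≤ j)) := by
    ext k
    simp only [Finset.mem_filter, Finset.mem_univ, true_and, Finset.mem_insert, Fin.ext_iff]
    omega
  rw [ordT, ordT, hfilter, Finset.sum_insert (by simp [Fin.lt_def, hij])]
  ring

lemma exists_ordT_eq (hρ : Ici 0 ⊆ range ρ) {w : Fin K → ℝ} (hw : Monotone w) :
    ∃ u, ordT ρ u = w := by
  have hinc : ∀ x, 0 ≤ x → ρ (Function.invFun ρ x) = x := fun x hx =>
    Function.invFun_eq (hρ (mem_Ici.2 hx))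
  let u : Fin K → ℝ := fun k =>
    if hk : (k : ℕ) = 0 then w k else Function.invFun ρ (w k - w ⟨k - 1, by omega⟩)
  refine ⟨u, funext fun ⟨n, hn⟩ => ?_⟩
  induction n with
  | zero => simp [ordT_of_val_eq_zero, u]
  | succ n ih =>
    have hprev : w ⟨n, by omega⟩ ≤ w ⟨n + 1, hn⟩ := hw (Fin.mk_le_mk.2 n.le_succ)
    rw [ordT_of_val_eq_succ u (j := ⟨n, by omega⟩) rfl, ih (by omega)]
    simp only [u, dif_neg n.succ_ne_zero, Nat.add_sub_cancel]
    rw [hinc _ (sub_nonneg.2 hprev)]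
    ring

end OrderingTransform

section SoftMin

variable {K : ℕ}

lemma psl_pos (v : Fin K → ℝ) (y : Fin K) : 0 < Psl v y :=
  div_pos (exp_pos _) (Finset.sum_pos (fun _ _ => exp_pos _) ⟨y, Finset.mem_univ y⟩)

lemma psl_le_psl {v : Fin K → ℝ} {a b : Fin K} (h : v a ≤ v b) : Psl v b ≤ Psl v a := by
  unfold Psl
  gcongr

lemma psl_mem_simplex [NeZero K] (v : Fin K → ℝ) : Psl v ∈ simplex K := by
  have hZ : 0 < ∑ k, exp (-v k) := Finset.sum_pos (fun k _ => exp_pos _) Finset.univ_nonempty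
  refine ⟨by simp only [Psl, ← Finset.sum_div, div_self hZ.ne'], fun y => ⟨(psl_pos v y).le, ?_⟩⟩
  rw [Psl, div_le_one hZ]
  exact Finset.single_le_sum (f := fun k => exp (-v k)) (fun k _ => (exp_pos _).le) (Finset.mem_univ y)

lemma psl_const_sub_log {p : Fin K → ℝ} (hp : ∀ k, 0 < p k) (hsum : ∑ k, p k = 1) (c : ℝ) :
    Psl (fun k => c - log (p k)) = p := by
  have hexp : ∀ k, exp (-(c - log (p k))) = p k / exp c := fun k => by
    rw [neg_sub, exp_sub, exp_log (hp k)]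
  funext y
  simp only [Psl, hexp, ← Finset.sum_div, hsum]
  field_simp

lemma unimodal_iff {p : Fin K → ℝ} :
    Unimodal p ↔ ∃ M, MonotoneOn p (Iic M) ∧ AntitoneOn p (Ici M) := by
  constructor
  · rintro ⟨M, -, hup, hdown⟩
    exact ⟨M, fun i _ j hj hij => hup i j hij hj, fun i hi j _ hij => hdown i j hi hij⟩
  · rintro ⟨M, hup, hdown⟩
    refine ⟨M, fun k => ?_, fun i j hij hj => hup (hij.trans hj) hj hij,
      fun i j hi hij => hdown hi (hi.trans hij) hij⟩
    rcases le_total k M with hk | hk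
    · exact hup hk self_mem_Iic hk
    · exact hdown self_mem_Ici hk hk

lemma psl_mem_uniSimplex [NeZero K] {v : Fin K → ℝ} {M : Fin K}
    (hanti : AntitoneOn v (Iic M)) (hmono : MonotoneOn v (Ici M)) : Psl v ∈ uniSimplex K :=
  ⟨psl_mem_simplex v, unimodal_iff.2 ⟨M, fun _ hi _ hj hij => psl_le_psl (hanti hi hj hij),
    fun _ hi _ hj hij => psl_le_psl (hmono hi hj hij)⟩⟩

end SoftMin

/-- the image of the VSL link map u ↦ (P_sl(y; τ(ρ[u])))_y
equals Δ̂_{K-1}^∅, the set of unimodal probability vectors with all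
coordinates nonzero. -/
theorem stmt3 (K : ℕ) (hK : 3 ≤ K)
    (ρ : ℝ → ℝ) (hρ : Set.range ρ = Set.Ici (0 : ℝ))
    (τ : ℝ → ℝ)
    (hτ1 : AntitoneOn τ (Set.Iio 0)) (hτ2 : MonotoneOn τ (Set.Ioi 0))
    (hτ3 : τ '' Set.Iic 0 = Set.Ici (τ 0))
    (hτ4 : τ '' Set.Ici 0 = Set.Ici (τ 0)) :
    Set.range (fun u : Fin K → ℝ => fun y : Fin K => Psl (fun k => τ (ordT ρ u k)) y)
      = {p : Fin K → ℝ | p ∈ uniSimplex K ∧ ∀ k, p k ≠ 0} := by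
  have : NeZero K := ⟨by omega⟩
  have hτ_min : ∀ x, τ 0 ≤ τ x := fun x => (le_total x 0).elim
    (fun hx => hτ3.subset (mem_image_of_mem τ hx)) (fun hx => hτ4.subset (mem_image_of_mem τ hx))
  have hτ_anti := hτ1.Iic_of_forall_le hτ_min
  have hτ_mono := hτ2.Ici_of_forall_le hτ_min
  ext p
  constructor
  · rintro ⟨u, rfl⟩
    obtain ⟨M, hanti, hmono⟩ := exists_antitoneOn_monotoneOn_comp hτ_anti hτ_mono
      (ordT_monotone (fun x => hρ.subset (mem_range_self x)) u)
    exact ⟨psl_mem_uniSimplex hanti hmono, fun k => (psl_pos _ k).ne'⟩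
  · rintro ⟨⟨⟨hsum, hbd⟩, hp⟩, hne⟩
    have hpos : ∀ k, 0 < p k := fun k => (hbd k).1.lt_of_ne' (hne k)
    obtain ⟨M, hup, hdown⟩ := unimodal_iff.1 hp
    obtain ⟨w, hw, hτw⟩ := exists_monotone_comp_eq hτ_anti hτ_mono hτ3.ge hτ4.ge
      (t := fun k => τ 0 - log (p k)) (M := M)
      (fun i hi j hj hij => sub_le_sub_left (log_le_log (hpos i) (hup hi hj hij)) _)
      (fun i hi j hj hij => sub_le_sub_left (log_le_log (hpos j) (hdown hi hj hij)) _)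
      (fun k => (le_sub_self_iff _).2 (log_nonpos (hbd k).1 (hbd k).2))
    obtain ⟨u, rfl⟩ := exists_ordT_eq hρ.ge hw
    exact ⟨u, (congrArg Psl hτw).trans (psl_const_sub_log hpos hsum _)⟩
end
end

section
/- Let K ≥ 3. The image of the map v ↦ (P_cl(y; v))_{y∈[K]} over the set of strictly increasing vectors v ∈ ℝ^{K−1} (v_1 < v_2 < ⋯ < v_{K−1}) equals Δ_{K-1}^∅, the set of probability vectors in the simplex with all coordinates nonzero. Consequently, the cumulative-logits model with learner class {ρ[g] : g : ℝ^d → ℝ^{K−1}} for a function ρ with range (0,∞) has the same representation ability as the SL model with the unrestricted learner class, namely {p : ℝ^d → Δ_{K-1}^∅}. -/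
/-! A positive probability vector on `K` points is the same thing as its chain of cumulative
sums `0 = c₀ < c₁ < ⋯ < c_K = 1`, and `P_cl(·; v)` has cumulative sums
`σ(v₁), …, σ(v_{K-1})`. Since `σ` is an increasing bijection `ℝ → (0, 1)`, the map
`v ↦ P_cl(·; v)` sends increasing vectors onto the positive simplex, the preimage of `p` being
`v_k = logit c_k`. The ordering transform `ρ[·]` is onto the increasing vectors because `ρ`
takes every positive value, in particular every gap `v_{k+1} - v_k`; the statement about
learner classes then follows pointwise by choice. -/

open scoped BigOperators

noncomputable section

/-- The logistic sigmoid. -/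
def sigmoid (t : ℝ) : ℝ := 1 / (1 + Real.exp (-t))

/-- Cumulative probabilities for the CL link: clCum v k = Pr(Y ≤ k). -/
def clCum {K : ℕ} (v : Fin (K - 1) → ℝ) (k : ℕ) : ℝ :=
  if _h : k = 0 then 0
  else if h2 : k ≤ K - 1 then sigmoid (v ⟨k - 1, by omega⟩) else 1

/-- The cumulative logits (CL) link function:
P_cl(1; v) = σ(v_1), P_cl(K; v) = 1 − σ(v_{K−1}),
P_cl(y; v) = σ(v_y) − σ(v_{y−1}) for 2 ≤ y ≤ K−1. -/
def Pcl {K : ℕ} (v : Fin (K - 1) → ℝ) (y : Fin K) : ℝ :=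
  clCum v ((y : ℕ) + 1) - clCum v (y : ℕ)

open Finset

lemma sigmoid_pos (t : ℝ) : 0 < sigmoid t := by
  unfold sigmoid; positivity

lemma sigmoid_lt_one (t : ℝ) : sigmoid t < 1 := by
  rw [sigmoid, div_lt_one (by positivity)]
  linarith [Real.exp_pos (-t)]

lemma sigmoid_strictMono : StrictMono sigmoid := by
  intro a b h
  apply one_div_lt_one_div_of_lt (by positivity)
  linarith [Real.exp_lt_exp.2 (neg_lt_neg h)]

def logit (c : ℝ) : ℝ := Real.log (c / (1 - c))

lemma sigmoid_logit {c : ℝ} (hc : c ∈ Set.Ioo 0 1) : sigmoid (logit c) = c := by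
  obtain ⟨h0, h1⟩ := hc
  have : 0 < 1 - c := by linarith
  rw [sigmoid, logit, Real.exp_neg, Real.exp_log (by positivity)]
  field_simp
  ring

lemma logit_strictMonoOn : StrictMonoOn logit (Set.Ioo 0 1) := by
  rintro a ⟨ha0, ha1⟩ b ⟨-, hb1⟩ hab
  apply Real.log_lt_log (div_pos ha0 (by linarith))
  rw [div_lt_div_iff₀ (by linarith) (by linarith)]
  nlinarith

section CumulativeLogits

variable {K : ℕ} (v : Fin (K - 1) → ℝ)

lemma clCum_zero : clCum v 0 = 0 := by simp [clCum]

lemma clCum_of_ne_zero_of_le {m : ℕ} (h0 : m ≠ 0) (hm : m ≤ K - 1) :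
    clCum v m = sigmoid (v ⟨m - 1, by omega⟩) := by
  simp [clCum, h0, hm]

lemma clCum_of_lt {m : ℕ} (hm : K - 1 < m) : clCum v m = 1 := by
  rw [clCum, dif_neg (by omega), dif_neg (by omega)]

lemma clCum_lt_succ {v : Fin (K - 1) → ℝ} (hv : StrictMono v) {m : ℕ} (hm : m < K) :
    clCum v m < clCum v (m + 1) := by
  rcases Nat.eq_zero_or_pos m with rfl | hm0
  · rcases le_or_gt 1 (K - 1) with h | h
    · rw [zero_add, clCum_zero, clCum_of_ne_zero_of_le v one_ne_zero h]
      exact sigmoid_pos _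
    · rw [zero_add, clCum_zero, clCum_of_lt v h]
      exact one_pos
  · rw [clCum_of_ne_zero_of_le v hm0.ne' (by omega)]
    rcases le_or_gt (m + 1) (K - 1) with h | h
    · rw [clCum_of_ne_zero_of_le v m.succ_ne_zero h]
      exact sigmoid_strictMono (hv (Fin.mk_lt_mk.2 (by omega)))
    · rw [clCum_of_lt v h]
      exact sigmoid_lt_one _

lemma Pcl_pos {v : Fin (K - 1) → ℝ} (hv : StrictMono v) (y : Fin K) : 0 < Pcl v y :=
  sub_pos.2 (clCum_lt_succ hv y.isLt)

lemma sum_Pcl (hK : 0 < K) : ∑ y, Pcl v y = 1 := by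
  rw [show ∑ y, Pcl v y = ∑ i ∈ range K, (clCum v (i + 1) - clCum v i) from
      Fin.sum_univ_eq_sum_range (fun i => clCum v (i + 1) - clCum v i) K,
    sum_range_sub (clCum v), clCum_zero, clCum_of_lt v (by omega), sub_zero]

lemma clCum_logit {c : ℕ → ℝ} (hc0 : c 0 = 0) (hcK : c K = 1)
    (hc : ∀ m, 0 < m → m < K → c m ∈ Set.Ioo 0 1) {m : ℕ} (hm : m ≤ K) :
    clCum (fun k : Fin (K - 1) => logit (c (k + 1))) m = c m := by
  rcases Nat.eq_zero_or_pos m with rfl | hm0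
  · rw [clCum_zero, hc0]
  rcases le_or_gt m (K - 1) with h | h
  · rw [clCum_of_ne_zero_of_le _ hm0.ne' h, Nat.sub_add_cancel hm0]
    exact sigmoid_logit (hc m hm0 (by omega))
  · rw [clCum_of_lt _ h, show m = K by omega, hcK]

end CumulativeLogits

lemma mem_simplex_of_pos {K : ℕ} {p : Fin K → ℝ} (hp : ∀ k, 0 < p k) (hsum : ∑ k, p k = 1) :
    p ∈ simplex K :=
  ⟨hsum, fun k => ⟨(hp k).le,
    hsum ▸ single_le_sum (fun i _ => (hp i).le) (mem_univ k)⟩⟩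

def cumSum {K : ℕ} (p : Fin K → ℝ) (m : ℕ) : ℝ :=
  ∑ j : Fin K with j.val < m, p j

section CumSum

variable {K : ℕ} (p : Fin K → ℝ)

lemma cumSum_zero : cumSum p 0 = 0 := by simp [cumSum]

lemma cumSum_of_le {m : ℕ} (hm : K ≤ m) : cumSum p m = ∑ k, p k := by
  rw [cumSum, filter_true_of_mem fun j _ => by omega]

lemma cumSum_succ (y : Fin K) : cumSum p (y + 1) = cumSum p y + p y := by
  have : univ.filter (fun j : Fin K => j.val < y + 1)
      = insert y (univ.filter (fun j : Fin K => j.val < y)) := by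
    ext j
    simp only [mem_filter, mem_univ, true_and, mem_insert, Fin.ext_iff]
    omega
  rw [cumSum, this, sum_insert (by simp), add_comm, cumSum]

lemma cumSum_lt_cumSum {p : Fin K → ℝ} (hp : ∀ k, 0 < p k) {a b : ℕ} (hab : a < b)
    (ha : a < K) : cumSum p a < cumSum p b :=
  sum_lt_sum_of_subset (fun j => by simp only [mem_filter, mem_univ, true_and]; omega)
    (i := ⟨a, ha⟩) (by simpa using hab) (by simp) (hp _) (fun j _ _ => (hp j).le)

end CumSum

theorem image_Pcl_strictMono {K : ℕ} (hK : 0 < K) :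
    (fun v : Fin (K - 1) → ℝ => fun y : Fin K => Pcl v y) '' {v | StrictMono v}
      = {p : Fin K → ℝ | p ∈ simplex K ∧ ∀ k, p k ≠ 0} := by
  ext p
  constructor
  · rintro ⟨v, hv, rfl⟩
    exact ⟨mem_simplex_of_pos (Pcl_pos hv) (sum_Pcl v hK), fun k => (Pcl_pos hv k).ne'⟩
  · rintro ⟨hp, hne⟩
    have hpos : ∀ k, 0 < p k := fun k => lt_of_le_of_ne (hp.2 k).1 (hne k).symm
    have hc0 := cumSum_zero p
    have hcK : cumSum p K = 1 := (cumSum_of_le p le_rfl).trans hp.1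
    have hc : ∀ m, 0 < m → m < K → cumSum p m ∈ Set.Ioo 0 1 := fun m hm0 hmK =>
      ⟨hc0 ▸ cumSum_lt_cumSum hpos hm0 hK, hcK ▸ cumSum_lt_cumSum hpos hmK hmK⟩
    refine ⟨fun k => logit (cumSum p (k + 1)), fun k k' hkk' => ?_, funext fun y => ?_⟩
    · have hk := k'.isLt
      exact logit_strictMonoOn (hc _ k.val.succ_pos (by omega)) (hc _ k'.val.succ_pos (by omega))
        (cumSum_lt_cumSum hpos (Nat.succ_lt_succ hkk') (by omega))
    · show Pcl _ y = p y
      rw [Pcl, clCum_logit hc0 hcK hc y.isLt, clCum_logit hc0 hcK hc y.isLt.le,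
        cumSum_succ, add_sub_cancel_left]

section OrderingTransform

variable {ρ : ℝ → ℝ}

lemma ordT_zero {n : ℕ} (u : Fin (n + 1) → ℝ) : ordT ρ u 0 = u 0 := by
  simp [ordT, pos_iff_ne_zero]

lemma ordT_succ {n : ℕ} (u : Fin (n + 1) → ℝ) (k : Fin n) :
    ordT ρ u k.succ = ordT ρ u k.castSucc + ρ (u k.succ) := by
  have : univ.filter (fun j : Fin (n + 1) => 0 < j.val ∧ j.val ≤ k.succ)
      = insert k.succ (univ.filter (fun j : Fin (n + 1) => 0 < j.val ∧ j.val ≤ k.castSucc)) := by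
    ext j
    simp only [mem_filter, mem_univ, true_and, mem_insert, Fin.ext_iff, Fin.val_succ,
      Fin.val_castSucc]
    omega
  simp only [ordT, this]
  rw [sum_insert (by simp), add_comm (ρ _), add_assoc]

lemma ordT_strictMono (hρ : ∀ t, 0 < ρ t) {n : ℕ} (u : Fin n → ℝ) : StrictMono (ordT ρ u) := by
  cases n with
  | zero => exact fun a => a.elim0
  | succ n =>
    refine Fin.strictMono_iff_lt_succ.2 fun k => ?_
    rw [ordT_succ]
    linarith [hρ (u k.succ)]

lemma range_ordT (hρ : Set.range ρ = Set.Ioi 0) (n : ℕ) :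
    Set.range (ordT ρ (K := n)) = {v | StrictMono v} := by
  have hpos : ∀ t, 0 < ρ t := fun t => hρ.subset ⟨t, rfl⟩
  refine subset_antisymm (Set.range_subset_iff.2 (ordT_strictMono hpos)) fun v hv => ?_
  cases n with
  | zero => exact ⟨v, funext fun a => a.elim0⟩
  | succ n =>
    have hgap : ∀ k : Fin n, ∃ t, ρ t = v k.succ - v k.castSucc := fun k =>
      hρ.symm.subset (sub_pos.2 (hv k.castSucc_lt_succ))
    choose w hw using hgap
    refine ⟨Fin.cons (v 0) w, funext fun k => ?_⟩
    induction k using Fin.induction with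
    | zero => rw [ordT_zero, Fin.cons_zero]
    | succ k ih => rw [ordT_succ, ih, Fin.cons_succ, hw, add_sub_cancel]

end OrderingTransform

theorem stmt16_general (K d : ℕ) (hK : 3 ≤ K)
    (ρ : ℝ → ℝ) (hρ : Set.range ρ = Set.Ioi (0 : ℝ)) :
    ((fun v : Fin (K - 1) → ℝ => fun y : Fin K => Pcl v y) '' {v | StrictMono v}
      = {p : Fin K → ℝ | p ∈ simplex K ∧ ∀ k, p k ≠ 0})
    ∧ ({P : (Fin d → ℝ) → Fin K → ℝ |
          ∃ g : (Fin d → ℝ) → Fin (K - 1) → ℝ,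
            ∀ x y, P x y = Pcl (ordT ρ (g x)) y}
        = {p : (Fin d → ℝ) → Fin K → ℝ |
            ∀ x, p x ∈ simplex K ∧ ∀ k, p x k ≠ 0}) := by
  have hCL := image_Pcl_strictMono (K := K) (by omega)
  have hrange : ∀ p : Fin K → ℝ, p ∈ simplex K ∧ (∀ k, p k ≠ 0) ↔
      ∃ u, (fun y => Pcl (ordT ρ u) y) = p := fun p => by
    rw [← Set.mem_ofPred_eq (p := fun p => p ∈ simplex K ∧ ∀ k, p k ≠ 0), ← hCL,
      ← range_ordT hρ, ← Set.range_comp]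
    rfl
  refine ⟨hCL, Set.ext fun P => ?_⟩
  simp only [Set.mem_ofPred_eq, hrange, funext_iff, eq_comm]
  exact (Classical.skolem (p := fun x u => ∀ y, P x y = Pcl (ordT ρ u) y)).symm

/-- the image of the CL link over strictly increasing vectors
equals Δ_{K-1}^∅; consequently, the CL model with learner class
{ρ[g] : g : ℝ^d → ℝ^{K−1}} for ρ with range (0,∞) has the same
representation ability as the SL model with the unrestricted learner class,
namely the maps into Δ_{K-1}^∅. -/
theorem stmt16 (K d : ℕ) (hK : 3 ≤ K) (hd : 1 ≤ d)
    (ρ : ℝ → ℝ) (hρ : Set.range ρ = Set.Ioi (0 : ℝ)) :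
    ((fun v : Fin (K - 1) → ℝ => fun y : Fin K => Pcl v y) '' {v | StrictMono v}
      = {p : Fin K → ℝ | p ∈ simplex K ∧ ∀ k, p k ≠ 0})
    ∧ ({P : (Fin d → ℝ) → Fin K → ℝ |
          ∃ g : (Fin d → ℝ) → Fin (K - 1) → ℝ,
            ∀ x y, P x y = Pcl (ordT ρ (g x)) y}
        = {p : (Fin d → ℝ) → Fin K → ℝ |
            ∀ x, p x ∈ simplex K ∧ ∀ k, p x k ≠ 0}) :=
  stmt16_general K d hK ρ hρ
end
end
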